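/- arXiv:2505.00645 — 2 statements merged into one kernel-verified Lean document; each statement's English description precedes it below -/
import Mathlib

section
/- The twist J = Σ_{k=0}^{n-1} e_k ⊗ x^k for B = K[Z_n] satisfies (S ⊗ S)(J) = J, where S is the antipode of B. -/
/-!
The antipode inverts group elements, so `S (x^k) = x^(-k)`, and `S (e_k) = e_(-k)`: since `q^n = 1`
the coefficient `q^(ik)` depends only on `ik ∈ ℤ/n`, so `e_k` is a sum over `ℤ/n` and
`S (e_k) = e_(-k)` is the reindexing `i ↦ -i` of it. Hence `(S ⊗ S) J = ∑_k e_(-k) ⊗ x^(-k)`,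
which is `J` reindexed by `k ↦ -k`.
-/

set_option linter.unusedSectionVars false

open MonoidAlgebra Finset
open scoped TensorProduct

noncomputable section

variable (K : Type*) [CommRing K] (G : Type*) [CommGroup G]

namespace GroupBialgebra

instance instCoalgebra : Coalgebra K (MonoidAlgebra K G) :=
  MonoidAlgebra.instCoalgebra K K G

variable {K G}

lemma comul_single (g : G) (c : K) :
    Coalgebra.comul (R := K) (MonoidAlgebra.single g c) =
      MonoidAlgebra.single g (1 : K) ⊗ₜ[K] MonoidAlgebra.single g c := by
  have h := MonoidAlgebra.comul_single (R := K) g c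
  simp only [CommSemiring.comul_apply, TensorProduct.map_tmul, MonoidAlgebra.lsingle_apply] at h
  exact h

lemma counit_single (g : G) (c : K) :
    Coalgebra.counit (R := K) (MonoidAlgebra.single g c) = c := by
  have h := MonoidAlgebra.counit_single (R := K) g c
  simp only [CommSemiring.counit_apply] at h
  exact h

variable (K G)

instance instBialgebra : Bialgebra K (MonoidAlgebra K G) :=
  Bialgebra.mk' K (MonoidAlgebra K G)
    (by simpa [MonoidAlgebra.one_def] using counit_single (1 : G) (1 : K))
    (fun {a b} => by
      induction a using MonoidAlgebra.induction_linear with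
      | zero => simp
      | add f h hf hh => simp [add_mul, hf, hh]
      | single g c =>
        induction b using MonoidAlgebra.induction_linear with
        | zero => simp
        | add f h hf hh => simp [mul_add, hf, hh]
        | single h d =>
          simp only [MonoidAlgebra.single_mul_single, counit_single])
    (by rw [MonoidAlgebra.one_def, comul_single, Algebra.TensorProduct.one_def, MonoidAlgebra.one_def])
    (fun {a b} => by
      induction a using MonoidAlgebra.induction_linear with
      | zero => simp
      | add f h hf hh => simp [add_mul, hf, hh]
      | single g c =>
        induction b using MonoidAlgebra.induction_linear with
        | zero => simp
        | add f h hf hh => simp [mul_add, hf, hh]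
        | single h d =>
          simp only [MonoidAlgebra.single_mul_single, comul_single,
            Algebra.TensorProduct.tmul_mul_tmul, one_mul])

end GroupBialgebra

end

noncomputable section

/-- The group algebra `K[Z_n]` of the cyclic group of order `n`. -/
abbrev GroupAlgZn (K : Type*) [CommRing K] (n : ℕ) : Type _ :=
  MonoidAlgebra K (Multiplicative (ZMod n))

/-- The canonical generator `x` of the group algebra `K[Z_n]`. -/
def xgen (K : Type*) [CommRing K] (n : ℕ) : GroupAlgZn K n :=
  MonoidAlgebra.of K (Multiplicative (ZMod n)) (Multiplicative.ofAdd (1 : ZMod n))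

/-- The idempotent `e_k = (1/n) ∑_{i=0}^{n-1} q^{-ik} x^i` in `K[Z_n]`. -/
def eIdem (K : Type*) [Field K] (n : ℕ) (q : K) (k : ZMod n) : GroupAlgZn K n :=
  (n : K)⁻¹ • ∑ i ∈ Finset.range n, (q ^ (i * k.val))⁻¹ • (xgen K n) ^ i

/-- The antipode of the group Hopf algebra `K[Z_n]`, the algebra map induced by `g ↦ g⁻¹`. -/
def antipodeGA (K : Type*) [CommRing K] (n : ℕ) : GroupAlgZn K n →ₐ[K] GroupAlgZn K n :=
  MonoidAlgebra.lift K (GroupAlgZn K n) (Multiplicative (ZMod n))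
    ((MonoidAlgebra.of K (Multiplicative (ZMod n))).comp invMonoidHom)

open Multiplicative

theorem ZMod.sum_univ_eq_sum_range {M : Type*} [AddCommMonoid M] {n : ℕ} [NeZero n]
    (f : ZMod n → M) : ∑ a, f a = ∑ k ∈ range n, f k := by
  symm
  refine Finset.sum_nbij (fun k ↦ (k : ZMod n)) (fun _ _ ↦ mem_univ _) ?_ ?_ (fun _ _ ↦ rfl)
  · intro i hi j hj hij
    simpa [ZMod.val_cast_of_lt (mem_range.1 hi), ZMod.val_cast_of_lt (mem_range.1 hj)]
      using congrArg ZMod.val hij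
  · intro a _
    exact ⟨a.val, by simp [ZMod.val_lt], by simp⟩

lemma pow_eq_pow_val_natCast {M : Type*} [Monoid M] {q : M} {n : ℕ} (hq : q ^ n = 1) (m : ℕ) :
    q ^ m = q ^ (m : ZMod n).val := by
  rw [ZMod.val_natCast, ← pow_eq_pow_mod m hq]

section

variable {K : Type*} {n : ℕ}

lemma xgen_pow [CommRing K] (i : ℕ) : xgen K n ^ i = single (ofAdd (i : ZMod n)) (1 : K) := by
  rw [xgen, ← map_pow, of_apply, ← ofAdd_nsmul, nsmul_one]

lemma antipodeGA_single [CommRing K] (g : Multiplicative (ZMod n)) (c : K) :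
    antipodeGA K n (single g c) = single g⁻¹ c := by
  simp [antipodeGA, invMonoidHom]

lemma eIdem_eq_sum_univ [Field K] [NeZero n] {q : K} (hq : q ^ n = 1) (a : ZMod n) :
    eIdem K n q a = (n : K)⁻¹ • ∑ b : ZMod n, (q ^ (b * a).val)⁻¹ • single (ofAdd b) (1 : K) := by
  rw [eIdem, ZMod.sum_univ_eq_sum_range]
  congr! 2 with i
  rw [xgen_pow, pow_eq_pow_val_natCast hq]
  push_cast
  rw [ZMod.natCast_zmod_val]

lemma antipodeGA_eIdem [Field K] [NeZero n] {q : K} (hq : q ^ n = 1) (a : ZMod n) :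
    antipodeGA K n (eIdem K n q a) = eIdem K n q (-a) := by
  rw [eIdem_eq_sum_univ hq, eIdem_eq_sum_univ hq, map_smul, map_sum,
    ← Equiv.sum_comp (Equiv.neg (ZMod n))]
  simp only [Equiv.neg_apply, neg_mul, mul_neg, ofAdd_neg, smul_single, smul_eq_mul,
    mul_one, antipodeGA_single, inv_inv]

end

theorem SS_J_eq_J_general (K : Type*) [Field K] (n : ℕ)
    (q : K) (hq : IsPrimitiveRoot q n) :
    let J : GroupAlgZn K n ⊗[K] GroupAlgZn K n :=
      ∑ k ∈ Finset.range n, eIdem K n q ((k : ℕ) : ZMod n) ⊗ₜ[K] ((xgen K n) ^ k)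
    TensorProduct.map (antipodeGA K n).toLinearMap (antipodeGA K n).toLinearMap J = J := by
  intro J
  rcases Nat.eq_zero_or_pos n with rfl | hn
  · simp [J]
  have : NeZero n := ⟨hn.ne'⟩
  simp only [J, xgen_pow, ← ZMod.sum_univ_eq_sum_range
    (fun a ↦ eIdem K n q a ⊗ₜ[K] single (ofAdd a) (1 : K))]
  rw [map_sum, ← Equiv.sum_comp (Equiv.neg (ZMod n))]
  simp only [Equiv.neg_apply, ofAdd_neg, TensorProduct.map_tmul, AlgHom.toLinearMap_apply,
    antipodeGA_eIdem hq.pow_eq_one, neg_neg, antipodeGA_single, inv_inv]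

/-- the twist `J = ∑_k e_k ⊗ x^k` satisfies `(S ⊗ S)(J) = J`. -/
theorem SS_J_eq_J (K : Type*) [Field K] [CharZero K] (n : ℕ) (hn : 2 ≤ n)
    (q : K) (hq : IsPrimitiveRoot q n) :
    let J : GroupAlgZn K n ⊗[K] GroupAlgZn K n :=
      ∑ k ∈ Finset.range n, eIdem K n q ((k : ℕ) : ZMod n) ⊗ₜ[K] ((xgen K n) ^ k)
    TensorProduct.map (antipodeGA K n).toLinearMap (antipodeGA K n).toLinearMap J = J :=
  SS_J_eq_J_general K n q hq
end
end

section
/- Let B be a bialgebra with a twist J such that (e₁² ⊗ e₂²)(J) is a twist for B ⊗ B. Then for any m ≥ 2 and any 1 ≤ i < j ≤ m, the element (eᵢᵐ ⊗ eⱼᵐ)(J) is a twist for B^{⊗m}, where eᵢᵐ : B → B^{⊗m} is the embedding into the i-th tensor factor. -/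
/-!
For `i < j` the embeddings `eᵢ, eⱼ : B → B^{⊗m}` are bialgebra maps with commuting images, so
`a ⊗ b ↦ eᵢ(a) eⱼ(b)` is a bialgebra map `B ⊗ B → B^{⊗m}`; it sends `(e₁² ⊗ e₂²)(J)` to
`(eᵢᵐ ⊗ eⱼᵐ)(J)`. A bialgebra map `f` carries twists to twists: `f ⊗ f` is multiplicative and
intertwines `Δ ⊗ id`, `id ⊗ Δ`, `ε ⊗ id` and `id ⊗ ε`, so it transports the twist equation and
the counit conditions.
-/

set_option synthInstance.maxHeartbeats 1000000

open scoped TensorProduct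

noncomputable section

universe u

/-- `J ∈ R ⊗ R` is a twist for the bialgebra `R`: it is invertible, satisfies the twist
equation `(Δ ⊗ id)(J)(J ⊗ 1) = (id ⊗ Δ)(J)(1 ⊗ J)`, and `(ε ⊗ id)(J) = 1 = (id ⊗ ε)(J)`. -/
def IsTwist (K : Type u) [CommRing K] (R : Type u) [Ring R] [Bialgebra K R]
    (J : R ⊗[K] R) : Prop :=
  IsUnit J ∧
  (TensorProduct.assoc K R R R)
      ((LinearMap.rTensor R (Coalgebra.comul (R := K))) J * (J ⊗ₜ[K] (1 : R))) =
    (LinearMap.lTensor R (Coalgebra.comul (R := K))) J * ((1 : R) ⊗ₜ[K] J) ∧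
  (TensorProduct.lid K R) ((LinearMap.rTensor R (Coalgebra.counit (R := K))) J) = 1 ∧
  (TensorProduct.rid K R) ((LinearMap.lTensor R (Coalgebra.counit (R := K))) J) = 1

variable (K B : Type u) [CommRing K] [Ring B] [Bialgebra K B]

/-- Iterated tensor powers of a bialgebra, bundled with their bialgebra structure:
`TPowAux K B m` carries the underlying type of `B^{⊗(m+1)}`. -/
def TPowAux : ℕ → Σ' (A : Type u) (_ : Ring A), Bialgebra K A
  | 0 => ⟨B, inferInstance, inferInstance⟩
  | (m + 1) =>
    let P := TPowAux m
    letI : Ring P.1 := P.2.1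
    letI : Bialgebra K P.1 := P.2.2
    ⟨B ⊗[K] P.1, inferInstance, inferInstance⟩

/-- The `(m+1)`-fold tensor power `B^{⊗(m+1)}`. -/
def TPow (m : ℕ) : Type u := (TPowAux K B m).1

instance (m : ℕ) : Ring (TPow K B m) := (TPowAux K B m).2.1

instance (m : ℕ) : Bialgebra K (TPow K B m) := (TPowAux K B m).2.2

/-- The embedding `e_i^{m+1} : B → B^{⊗(m+1)}` of `B` into the `i`-th tensor factor
(`0`-indexed). -/
def emb : (m : ℕ) → ℕ → (B →ₐ[K] TPow K B m)
  | 0, _ => AlgHom.id K B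
  | (m + 1), 0 =>
    (Algebra.TensorProduct.includeLeft : B →ₐ[K] B ⊗[K] TPow K B m)
  | (m + 1), (i + 1) =>
    ((Algebra.TensorProduct.includeRight : TPow K B m →ₐ[K] B ⊗[K] TPow K B m).comp
      (emb m i) : B →ₐ[K] B ⊗[K] TPow K B m)

namespace CoalgHomClass

open Coalgebra TensorProduct

variable {R A C F : Type*} [CommSemiring R] [AddCommMonoid A] [AddCommMonoid C] [Module R A]
  [Module R C] [Coalgebra R A] [Coalgebra R C] [FunLike F A C] [CoalgHomClass F R A C] (f : F)

lemma rTensor_comul_map_apply (x : A ⊗[R] A) :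
    LinearMap.rTensor C comul (map (f : A →ₗ[R] C) (f : A →ₗ[R] C) x) =
      map (map (f : A →ₗ[R] C) (f : A →ₗ[R] C)) (f : A →ₗ[R] C)
        (LinearMap.rTensor A (comul (R := R)) x) := by
  induction x using TensorProduct.induction_on with
  | zero => simp
  | tmul a b => simp [map_comp_comul_apply]
  | add x y hx hy => simp only [map_add, hx, hy]

lemma lTensor_comul_map_apply (x : A ⊗[R] A) :
    LinearMap.lTensor C comul (map (f : A →ₗ[R] C) (f : A →ₗ[R] C) x) =
      map (f : A →ₗ[R] C) (map (f : A →ₗ[R] C) (f : A →ₗ[R] C))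
        (LinearMap.lTensor A (comul (R := R)) x) := by
  induction x using TensorProduct.induction_on with
  | zero => simp
  | tmul a b => simp [map_comp_comul_apply]
  | add x y hx hy => simp only [map_add, hx, hy]

lemma lid_rTensor_counit_map_apply (x : A ⊗[R] A) :
    TensorProduct.lid R C (LinearMap.rTensor C counit (map (f : A →ₗ[R] C) (f : A →ₗ[R] C) x)) =
      f (TensorProduct.lid R A (LinearMap.rTensor A (counit (R := R)) x)) := by
  induction x using TensorProduct.induction_on with
  | zero => simp
  | tmul a b => simp [counit_comp_apply]
  | add x y hx hy => simp only [map_add, hx, hy]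

lemma rid_lTensor_counit_map_apply (x : A ⊗[R] A) :
    TensorProduct.rid R C (LinearMap.lTensor C counit (map (f : A →ₗ[R] C) (f : A →ₗ[R] C) x)) =
      f (TensorProduct.rid R A (LinearMap.lTensor A (counit (R := R)) x)) := by
  induction x using TensorProduct.induction_on with
  | zero => simp
  | tmul a b => simp [counit_comp_apply]
  | add x y hx hy => simp only [map_add, hx, hy]

lemma map_comul_apply_of_comp_eq {D G H : Type*} [AddCommMonoid D] [Module R D] [Coalgebra R D]
    [FunLike G A D] [CoalgHomClass G R A D] [FunLike H A C] [CoalgHomClass H R A C]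
    (ι : G) (L : D →ₗ[R] C) (g : H) (hL : ∀ a, L (ι a) = g a) (a : A) :
    map L L (comul (R := R) (ι a)) = comul (L (ι a)) := by
  have hL' : L ∘ₗ (ι : A →ₗ[R] D) = g := LinearMap.ext hL
  rw [← map_comp_comul_apply, ← LinearMap.comp_apply, ← map_comp, hL', map_comp_comul_apply, hL]

end CoalgHomClass

namespace Bialgebra.TensorProduct

variable {R A B C : Type*} [CommRing R] [Ring A] [Ring B] [Ring C]
  [Bialgebra R A] [Bialgebra R B] [Bialgebra R C]

-- The inclusions are built from the units of `A` and `B`, which are bialgebra maps; `copy`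
-- makes them compute as `Algebra.TensorProduct.includeLeft` and `includeRight`.
variable (R A B) in
def includeLeft : A →ₐc[R] A ⊗[R] B :=
  ((BialgHom.lTensor A (Bialgebra.unitBialgHom R B)).comp
    (Bialgebra.TensorProduct.rid R R A).symm.toBialgHom).copy
    (Algebra.TensorProduct.includeLeft : A →ₐ[R] A ⊗[R] B) (by ext; simp [unitBialgHom])

variable (R A B) in
def includeRight : B →ₐc[R] A ⊗[R] B :=
  ((BialgHom.rTensor B (Bialgebra.unitBialgHom R A)).comp
    (Bialgebra.TensorProduct.lid R B).symm.toBialgHom).copy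
    (Algebra.TensorProduct.includeRight : B →ₐ[R] A ⊗[R] B) (by ext; simp [unitBialgHom])

@[simp] lemma coe_includeLeft :
    ⇑(includeLeft R A B) = (Algebra.TensorProduct.includeLeft : A →ₐ[R] A ⊗[R] B) := rfl

@[simp] lemma coe_includeRight :
    ⇑(includeRight R A B) = (Algebra.TensorProduct.includeRight : B →ₐ[R] A ⊗[R] B) := rfl

def lift (f : A →ₐc[R] C) (g : B →ₐc[R] C) (hfg : ∀ a b, Commute (f a) (g b)) :
    A ⊗[R] B →ₐc[R] C :=
  -- the `show` keeps the coercions to `→ₐ` literal, so that `lift_tmul` can fire on `L`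
  let L := Algebra.TensorProduct.lift (f : A →ₐ[R] C) g
    (fun a b => show Commute ((f : A →ₐ[R] C) a) ((g : B →ₐ[R] C) b) from hfg a b)
  .ofAlgHom L (by ext <;> simp [L]) (by
    apply Algebra.TensorProduct.ext
    · ext a
      exact CoalgHomClass.map_comul_apply_of_comp_eq (includeLeft R A B) L.toLinearMap f
        (fun a => by simp [L]) a
    · ext b
      exact CoalgHomClass.map_comul_apply_of_comp_eq (includeRight R A B) L.toLinearMap g
        (fun b => by simp [L]) b)

@[simp] lemma lift_tmul (f : A →ₐc[R] C) (g : B →ₐc[R] C) (hfg : ∀ a b, Commute (f a) (g b))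
    (a : A) (b : B) : lift f g hfg (a ⊗ₜ b) = f a * g b := rfl

end Bialgebra.TensorProduct

section Twist

variable {K} {R S : Type u} [Ring R] [Ring S] [Bialgebra K R] [Bialgebra K S]

theorem IsTwist.map (f : R →ₐc[K] S) {J : R ⊗[K] R} (hJ : IsTwist K R J) :
    IsTwist K S (TensorProduct.map (f : R →ₗ[K] S) (f : R →ₗ[K] S) J) := by
  obtain ⟨hunit, htwist, hcounitL, hcounitR⟩ := hJ
  set f₂ := Bialgebra.TensorProduct.map f f
  -- `f ⊗ f` and `f ⊗ f ⊗ f`, seen as bialgebra maps so that `map_mul` applies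
  have hf₂ : ∀ x, TensorProduct.map (f : R →ₗ[K] S) (f : R →ₗ[K] S) x = f₂ x := fun _ => rfl
  have hL : ∀ x, TensorProduct.map (TensorProduct.map (f : R →ₗ[K] S) (f : R →ₗ[K] S))
      (f : R →ₗ[K] S) x = Bialgebra.TensorProduct.map f₂ f x := fun _ => rfl
  have hR : ∀ x, TensorProduct.map (f : R →ₗ[K] S)
      (TensorProduct.map (f : R →ₗ[K] S) (f : R →ₗ[K] S)) x =
        Bialgebra.TensorProduct.map f f₂ x := fun _ => rfl
  refine ⟨hunit.map f₂, ?_, ?_, ?_⟩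
  · have h1 : f₂ J ⊗ₜ[K] (1 : S) = Bialgebra.TensorProduct.map f₂ f (J ⊗ₜ 1) := by simp
    have h2 : (1 : S) ⊗ₜ[K] f₂ J = Bialgebra.TensorProduct.map f f₂ (1 ⊗ₜ J) := by simp
    rw [CoalgHomClass.rTensor_comul_map_apply f, CoalgHomClass.lTensor_comul_map_apply f, hL, hR,
      hf₂, h1, h2, ← map_mul, ← map_mul, ← hL, ← TensorProduct.map_map_assoc, hR, htwist]
  · rw [CoalgHomClass.lid_rTensor_counit_map_apply f, hcounitL, map_one]
  · rw [CoalgHomClass.rid_lTensor_counit_map_apply f, hcounitR, map_one]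

theorem IsTwist.map_of_commute (f g : R →ₐc[K] S) (hfg : ∀ a b, Commute (f a) (g b))
    {J : R ⊗[K] R}
    (hJ : IsTwist K (R ⊗[K] R) (TensorProduct.map
      (Algebra.TensorProduct.includeLeft : R →ₐ[K] R ⊗[K] R).toLinearMap
      (Algebra.TensorProduct.includeRight : R →ₐ[K] R ⊗[K] R).toLinearMap J)) :
    IsTwist K S (TensorProduct.map (f : R →ₗ[K] S) (g : R →ₗ[K] S) J) := by
  have h := hJ.map (Bialgebra.TensorProduct.lift f g hfg)
  rw [← LinearMap.comp_apply, ← TensorProduct.map_comp] at h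
  convert h using 3 <;> ext <;> simp

end Twist

def embBialgHom : (m : ℕ) → ℕ → (B →ₐc[K] TPow K B m)
  | 0, _ => BialgHom.id K B
  | m + 1, 0 => Bialgebra.TensorProduct.includeLeft K B (TPow K B m)
  | m + 1, i + 1 =>
    (Bialgebra.TensorProduct.includeRight K B (TPow K B m)).comp (embBialgHom m i)

lemma coe_embBialgHom : ∀ m i, ⇑(embBialgHom K B m i) = emb K B m i
  | 0, _ => rfl
  | _ + 1, 0 => rfl
  | m + 1, i + 1 => funext fun b =>
    congrArg (fun x : TPow K B m => (1 : B) ⊗ₜ[K] x) (congrFun (coe_embBialgHom m i) b)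

lemma toLinearMap_embBialgHom (m i : ℕ) :
    (embBialgHom K B m i : B →ₗ[K] TPow K B m) = (emb K B m i).toLinearMap :=
  LinearMap.ext (congrFun (coe_embBialgHom K B m i))

lemma emb_commute : ∀ m i j, i < j → j ≤ m → ∀ a b, Commute (emb K B m i a) (emb K B m j b)
  | 0, _, _, hij, hjm, _, _ => absurd (hij.trans_le hjm) (Nat.not_lt_zero _)
  | m + 1, 0, j + 1, _, _, a, b =>
    show Commute (a ⊗ₜ[K] (1 : TPow K B m)) ((1 : B) ⊗ₜ[K] emb K B m j b) from
      (Commute.one_right a).tmul (Commute.one_left _)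
  | m + 1, i + 1, j + 1, hij, hjm, a, b =>
    (emb_commute m i j (Nat.succ_lt_succ_iff.mp hij) (Nat.succ_le_succ_iff.mp hjm) a b).map
      Algebra.TensorProduct.includeRight

theorem twist_tensor_power (J : B ⊗[K] B)
    (hJ2 : IsTwist K (TPow K B 1)
      (TensorProduct.map (emb K B 1 0).toLinearMap (emb K B 1 1).toLinearMap J)) :
    ∀ m : ℕ, 2 ≤ m → ∀ i j : ℕ, i < j → j < m →
      IsTwist K (TPow K B (m - 1))
        (TensorProduct.map (emb K B (m - 1) i).toLinearMap
          (emb K B (m - 1) j).toLinearMap J) := by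
  intro m _ i j hij hjm
  have hcomm := emb_commute K B (m - 1) i j hij (Nat.le_sub_one_of_lt hjm)
  rw [← coe_embBialgHom, ← coe_embBialgHom] at hcomm
  rw [← toLinearMap_embBialgHom, ← toLinearMap_embBialgHom]
  exact IsTwist.map_of_commute _ _ hcomm hJ2
end
end
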